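/- Let T ⊆ R_l be the ℤ-subalgebra generated by the l fundamental characters χ(1,0), χ(1,2), …, χ(1,2l−2). Then χ(k,a) ∈ T for every k ∈ ℕ and every even integer a, and Z ∈ T. (This is the character-level content of Proposition 2.5: every Kirillov–Reshetikhin character and the coefficient Z are polynomials with integer coefficients in the fundamental characters, so the monomials in the fundamental characters span the Grothendieck ring.) -/

import Mathlib

/-!
`Rl l` is the Laurent polynomial ring over `ℤ` in `l` commuting variables
`Y_0, Y_2, …, Y_{2l−2}`, with the index of `Y` read modulo `2l`.  It is realised
as the group algebra of the free abelian group `ZMod l →₀ ℤ`, the variable with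
even index `n` corresponding to the residue `n/2` modulo `l`.
-/

/-- The Laurent polynomial ring `ℤ[Y_0^{±1}, Y_2^{±1}, …, Y_{2l−2}^{±1}]`,
indices read modulo `2l`. -/
abbrev Rl (l : ℕ) : Type := AddMonoidAlgebra ℤ (ZMod l →₀ ℤ)

/-- The monomial `Y_n^e` (for `n` an even integer, read modulo `2l`). -/
noncomputable def Y (l : ℕ) (n e : ℤ) : Rl l :=
  AddMonoidAlgebra.single (Finsupp.single ((n / 2 : ℤ) : ZMod l) e) 1

/-- The `ε`-character `χ(k,a)` of the Kirillov–Reshetikhin module `W_ε(k,ε^a)`: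
`χ(k,a) = Σ_{i=0}^{k} (Π_{t=0}^{k−1−i} Y_{a+2t}) · (Π_{t=k+1−i}^{k} Y_{a+2t}^{−1})`. -/
noncomputable def chi (l : ℕ) (k : ℕ) (a : ℤ) : Rl l :=
  ∑ i ∈ Finset.range (k + 1),
    (∏ t ∈ Finset.range (k - i), Y l (a + 2 * (t : ℤ)) 1) *
      ∏ t ∈ Finset.Icc (k + 1 - i) k, Y l (a + 2 * (t : ℤ)) (-1)

/-- `Z = Y_0Y_2⋯Y_{2l−2} + (Y_0Y_2⋯Y_{2l−2})^{−1}`, the `ε`-character of the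
Frobenius pullback `z₁ = L(𝐘₁)`. -/
noncomputable def Z (l : ℕ) : Rl l :=
  (∏ t ∈ Finset.range l, Y l (2 * (t : ℤ)) 1) +
    ∏ t ∈ Finset.range l, Y l (2 * (t : ℤ)) (-1)

/-!
Multiplying `χ(k+1,a)` by `χ(1,a+2k+2)` gives the T-system relation
`χ(k+1,a) χ(1,a+2k+2) = χ(k+2,a) + χ(k,a)`, so by a two-step induction every `χ(k,a)` is an
integral polynomial in the `χ(1,b)`; these depend only on `b/2 mod l`, hence are fundamental
characters. Splitting off the two extreme monomials of `χ(l,0)`, the remaining ones are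
`Y_0 Y_{2l}⁻¹ χ(l−2,2) = χ(l−2,2)` because `Y_{2l} = Y_0`; thus `Z = χ(l,0) − χ(l−2,2)`.
-/

open Finset

theorem Finset.prod_Icc_one_eq_prod_range {M : Type*} [CommMonoid M] {f : ℕ → M} {n : ℕ}
    (h : f n = f 0) : ∏ t ∈ Icc 1 n, f t = ∏ t ∈ range n, f t := by
  cases n with
  | zero => rfl
  | succ n =>
    rw [prod_Icc_succ_top (by omega), prod_range_succ', ← h,
      ← Ico_add_one_right_eq_Icc, prod_Ico_eq_prod_range]
    simp only [add_tsub_cancel_right, add_comm 1]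

variable {l : ℕ}

theorem Y_mul (n e f : ℤ) : Y l n e * Y l n f = Y l n (e + f) := by
  simp [Y, AddMonoidAlgebra.single_mul_single, Finsupp.single_add]

theorem Y_zero (n : ℤ) : Y l n 0 = 1 := by
  simp [Y, AddMonoidAlgebra.one_def]

theorem Y_one_mul_Y_neg_one (n : ℤ) : Y l n 1 * Y l n (-1) = 1 := by
  rw [Y_mul, add_neg_cancel, Y_zero]

theorem Y_congr {m n : ℤ} (h : ((m / 2 : ℤ) : ZMod l) = ((n / 2 : ℤ) : ZMod l)) (e : ℤ) :
    Y l m e = Y l n e := by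
  unfold Y; rw [h]

theorem Y_add_two_mul_self (n e : ℤ) : Y l (n + 2 * l) e = Y l n e :=
  Y_congr (by rw [mul_comm, Int.add_mul_ediv_right _ _ two_ne_zero]; simp) e

theorem chi_congr (k : ℕ) {a b : ℤ} (h : ((a / 2 : ℤ) : ZMod l) = ((b / 2 : ℤ) : ZMod l)) :
    chi l k a = chi l k b := by
  have shift (c : ℤ) (t : ℕ) : (c + 2 * (t : ℤ)) / 2 = c / 2 + t := by omega
  unfold chi
  refine sum_congr rfl fun i _ => ?_
  congr 1 <;> refine prod_congr rfl fun t _ => Y_congr ?_ _ <;> push_cast [shift, h] <;> rfl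

theorem chi_zero (a : ℤ) : chi l 0 a = 1 := by
  simp [chi]

theorem chi_one (a : ℤ) : chi l 1 a = Y l a 1 + Y l (a + 2) (-1) := by
  simp [chi, sum_range_succ]

noncomputable def chiTerm (l : ℕ) (a : ℤ) (k i : ℕ) : Rl l :=
  (∏ t ∈ range (k - i), Y l (a + 2 * (t : ℤ)) 1) *
    ∏ t ∈ Icc (k + 1 - i) k, Y l (a + 2 * (t : ℤ)) (-1)

theorem chi_eq_sum_chiTerm (k : ℕ) (a : ℤ) :
    chi l k a = ∑ i ∈ range (k + 1), chiTerm l a k i := rfl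

theorem chiTerm_zero (a : ℤ) (k : ℕ) :
    chiTerm l a k 0 = ∏ t ∈ range k, Y l (a + 2 * (t : ℤ)) 1 := by
  simp [chiTerm]

theorem chiTerm_self (a : ℤ) (k : ℕ) :
    chiTerm l a k k = ∏ t ∈ Icc 1 k, Y l (a + 2 * (t : ℤ)) (-1) := by
  simp [chiTerm]

theorem chiTerm_mul_Y_neg_one (a : ℤ) (k i : ℕ) :
    chiTerm l a k i * Y l (a + 2 * ((k + 1 : ℕ) : ℤ)) (-1) = chiTerm l a (k + 1) (i + 1) := by
  rw [chiTerm, chiTerm, mul_assoc, ← prod_Icc_succ_top (by omega)]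
  congr 3 <;> omega

theorem chiTerm_succ_mul_Y_one (a : ℤ) (k i : ℕ) :
    chiTerm l a (k + 1) (i + 1) * Y l (a + 2 * ((k + 1 : ℕ) : ℤ)) 1 = chiTerm l a k i := by
  rw [← chiTerm_mul_Y_neg_one, mul_assoc, mul_comm (Y l _ (-1)), Y_one_mul_Y_neg_one, mul_one]

theorem chiTerm_zero_mul_Y_one (a : ℤ) (k : ℕ) :
    chiTerm l a k 0 * Y l (a + 2 * (k : ℤ)) 1 = chiTerm l a (k + 1) 0 := by
  rw [chiTerm_zero, chiTerm_zero, prod_range_succ]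

theorem chi_succ_mul_chi_one (k : ℕ) (a : ℤ) :
    chi l (k + 1) a * chi l 1 (a + 2 * ((k + 1 : ℕ) : ℤ)) = chi l (k + 2) a + chi l k a := by
  have raise : ∑ i ∈ range (k + 2), chiTerm l a (k + 1) i * Y l (a + 2 * ((k + 1 : ℕ) : ℤ)) 1 =
      chiTerm l a (k + 2) 0 + chi l k a := by
    rw [sum_range_succ', add_comm, chiTerm_zero_mul_Y_one, chi_eq_sum_chiTerm]
    simp only [chiTerm_succ_mul_Y_one]
  have lower : ∑ i ∈ range (k + 2), chiTerm l a (k + 1) i * Y l (a + 2 * ((k + 1 : ℕ) : ℤ) + 2) (-1) =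
      ∑ i ∈ range (k + 2), chiTerm l a (k + 2) (i + 1) := by
    refine sum_congr rfl fun i _ => ?_
    rw [← chiTerm_mul_Y_neg_one]
    push_cast
    ring_nf
  rw [chi_one, chi_eq_sum_chiTerm (k + 1), mul_add, sum_mul, sum_mul, raise, lower,
    chi_eq_sum_chiTerm (k + 2), sum_range_succ' _ (k + 2)]
  ring

theorem chiTerm_add_two_succ (a : ℤ) {k i : ℕ} (hi : i ≤ k) :
    chiTerm l a (k + 2) (i + 1) = Y l a 1 * Y l (a + 2 * ((k + 2 : ℕ) : ℤ)) (-1) * chiTerm l (a + 2) k i := by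
  have inner : ∏ t ∈ Icc (k + 2 - i) (k + 1), Y l (a + 2 * (t : ℤ)) (-1) =
      ∏ t ∈ Icc (k + 1 - i) k, Y l (a + 2 + 2 * (t : ℤ)) (-1) := by
    rw [show k + 2 - i = k + 1 - i + 1 by omega, ← map_add_right_Icc, prod_map]
    refine prod_congr rfl fun t _ => ?_
    simp only [addRightEmbedding_apply]
    push_cast
    ring_nf
  rw [chiTerm, chiTerm, show k + 2 - (i + 1) = k - i + 1 by omega, prod_range_succ',
    show k + 2 + 1 - (i + 1) = k + 2 - i by omega, prod_Icc_succ_top (by omega), inner]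
  simp only [Nat.cast_add, Nat.cast_zero, mul_zero, add_zero]
  ring_nf

theorem chi_add_two (k : ℕ) (a : ℤ) :
    chi l (k + 2) a = (∏ t ∈ range (k + 2), Y l (a + 2 * (t : ℤ)) 1) +
      (∏ t ∈ Icc 1 (k + 2), Y l (a + 2 * (t : ℤ)) (-1)) +
      Y l a 1 * Y l (a + 2 * ((k + 2 : ℕ) : ℤ)) (-1) * chi l k (a + 2) := by
  rw [chi_eq_sum_chiTerm, sum_range_succ, sum_range_succ', chi_eq_sum_chiTerm, mul_sum,
    sum_congr rfl fun i hi => chiTerm_add_two_succ a (Nat.lt_succ_iff.mp (mem_range.mp hi)),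
    chiTerm_zero, chiTerm_self]
  ring

theorem Z_eq_chi_sub_chi (n : ℕ) : Z (n + 2) = chi (n + 2) (n + 2) 0 - chi (n + 2) n 2 := by
  have wrap : Y (n + 2) 0 1 * Y (n + 2) (0 + 2 * ((n + 2 : ℕ) : ℤ)) (-1) = 1 := by
    rw [zero_add, ← zero_add (2 * _), Y_add_two_mul_self, Y_one_mul_Y_neg_one]
  have periodic : ∏ t ∈ Icc 1 (n + 2), Y (n + 2) (2 * (t : ℤ)) (-1) =
      ∏ t ∈ range (n + 2), Y (n + 2) (2 * (t : ℤ)) (-1) :=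
    prod_Icc_one_eq_prod_range (by rw [← zero_add (2 * _), Y_add_two_mul_self]; simp)
  rw [chi_add_two, wrap, one_mul, zero_add, Z]
  simp only [zero_add, periodic]
  ring

noncomputable def fundamentalSubalgebra (l : ℕ) : Subalgebra ℤ (Rl l) :=
  Algebra.adjoin ℤ (Set.range fun m : Fin l => chi l 1 (2 * (m : ℤ)))

theorem chi_one_mem_fundamentalSubalgebra [NeZero l] (a : ℤ) :
    chi l 1 a ∈ fundamentalSubalgebra l := by
  let x : ZMod l := (a / 2 : ℤ)
  have : chi l 1 (2 * (x.val : ℤ)) = chi l 1 a :=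
    chi_congr 1 (by rw [Int.mul_ediv_cancel_left _ two_ne_zero]; simp [x])
  exact this ▸ Algebra.subset_adjoin ⟨⟨x.val, x.val_lt⟩, rfl⟩

theorem chi_mem_fundamentalSubalgebra [NeZero l] (k : ℕ) (a : ℤ) :
    chi l k a ∈ fundamentalSubalgebra l := by
  induction k using Nat.twoStepInduction generalizing a with
  | zero => exact chi_zero (l := l) a ▸ one_mem _
  | one => exact chi_one_mem_fundamentalSubalgebra a
  | more k ih₀ ih₁ =>
    rw [eq_sub_of_add_eq (chi_succ_mul_chi_one k a).symm]
    exact sub_mem (mul_mem (ih₁ a) (chi_one_mem_fundamentalSubalgebra _)) (ih₀ a)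

theorem Z_mem_fundamentalSubalgebra (n : ℕ) : Z (n + 2) ∈ fundamentalSubalgebra (n + 2) := by
  rw [Z_eq_chi_sub_chi]
  exact sub_mem (chi_mem_fundamentalSubalgebra _ _) (chi_mem_fundamentalSubalgebra _ _)

/-- Proposition 2.5 in character form: every Kirillov–Reshetikhin character
`χ(k,a)` (`k ∈ ℕ`, `a` even) and the element `Z` lie in the `ℤ`-subalgebra of
`Rl l` generated by the `l` fundamental characters `χ(1,0), χ(1,2), …, χ(1,2l−2)`. -/
theorem chi_and_Z_in_fundamental_subalgebra (l : ℕ) (hl : 2 ≤ l) :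
    (∀ (k : ℕ) (a : ℤ), Even a →
        chi l k a ∈
          Algebra.adjoin ℤ (Set.range fun m : Fin l => chi l 1 (2 * (m : ℤ)))) ∧
      Z l ∈ Algebra.adjoin ℤ (Set.range fun m : Fin l => chi l 1 (2 * (m : ℤ))) := by
  obtain ⟨n, rfl⟩ : ∃ n, l = n + 2 := ⟨l - 2, by omega⟩
  exact ⟨fun k a _ => chi_mem_fundamentalSubalgebra k a, Z_mem_fundamentalSubalgebra n⟩
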